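/- If a connected graph G is 3-connected and has diameter 2, then f(G) = n(G). -/

import Mathlib

/-- A single pebbling step: remove two pebbles from `u` and place one on an adjacent `v`. -/
def PebStep {V : Type*} [DecidableEq V] (G : SimpleGraph V) (D D' : V → ℕ) : Prop :=
  ∃ u v : V, G.Adj u v ∧ 2 ≤ D u ∧
    D' = Function.update (Function.update D u (D u - 2)) v (D v + 1)

/-- `D` is `r`-solvable: some sequence of pebbling steps places a pebble on `r`. -/
def PebSolvable {V : Type*} [DecidableEq V] (G : SimpleGraph V) (D : V → ℕ) (r : V) : Prop :=
  ∃ D' : V → ℕ, Relation.ReflTransGen (PebStep G) D D' ∧ 1 ≤ D' r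

/-- The pebbling number of `G`: the least `t` such that every distribution of size `t`
is `r`-solvable for every root `r`. -/
noncomputable def pebblingNumber (V : Type*) [Fintype V] [DecidableEq V] (G : SimpleGraph V) : ℕ :=
  sInf {t : ℕ | ∀ D : V → ℕ, ∀ r : V, (∑ v, D v) = t → PebSolvable G D r}

/-!
Let `D` be a distribution of `n = |V|` pebbles from which the root `r` cannot be reached. A
vertex holding two pebbles can push one pebble along any path whose interior is occupied, so the
occupied component of a vertex with at least two pebbles (a *big* vertex) has no neighbour of `r`;
since every vertex is within distance two of `r`, no vertex holds four pebbles. As `∑ D = n`, the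
number of empty vertices is `#{D ≥ 2} + #{D = 3}`, and we exhibit that many empty vertices besides
`r`: every big vertex has its own empty common neighbour with `r`; a vertex with three pebbles
whose component touches two empty neighbours of `r` owns a second one; and the component of any
other vertex with three pebbles touches, by 3-connectivity, at least two empty vertices not
adjacent to `r`, none of which is touched by three such components. Conversely, `n - 1` pebbles,
one on each vertex other than `r`, cannot move at all.
-/

open Finset Relation SimpleGraph

lemma card_eq_zero_eq_of_sum_eq_card {V : Type*} [Fintype V] {D : V → ℕ}
    (hsum : ∑ v, D v = Fintype.card V) (h3 : ∀ v, D v ≤ 3) :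
    #{v | D v = 0} = #{v | 2 ≤ D v} + #{v | D v = 3} := by
  have key : ∀ v, D v + (if D v = 0 then 1 else 0) =
      1 + ((if 2 ≤ D v then 1 else 0) + (if D v = 3 then 1 else 0)) := fun v => by
    have := h3 v
    split_ifs <;> omega
  have := sum_congr (s₁ := univ) rfl fun v _ => key v
  simp only [sum_add_distrib, ← card_filter, sum_const, card_univ, smul_eq_mul, mul_one] at this
  omega

namespace SimpleGraph

variable {V : Type*} {G : SimpleGraph V} {D : V → ℕ} {u v w x y : V}

lemma eq_or_adj_or_exists_adj_adj_of_edist_le_two (h : G.edist u v ≤ 2) :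
    u = v ∨ G.Adj u v ∨ ∃ w, G.Adj u w ∧ G.Adj w v := by
  obtain ⟨n, hn⟩ := ENat.ne_top_iff_exists.mp (ne_top_of_le_ne_top (by decide) h)
  have hn2 : n ≤ 2 := by exact_mod_cast hn ▸ h
  interval_cases n
  · exact .inl (edist_eq_zero_iff.mp hn.symm)
  · exact .inr (.inl (edist_eq_one_iff_adj.mp hn.symm))
  · obtain ⟨w, hw⟩ := (edist_eq_two_iff.mp hn.symm).2.2
    exact .inr (.inr ⟨w, hw.1, hw.2.symm⟩)

lemma edist_le_two_of_diam_eq_two (hd : G.diam = 2) (u v : V) : G.edist u v ≤ 2 :=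
  calc G.edist u v ≤ G.ediam := edist_le_ediam
    _ = G.diam := (ENat.natCast_toNat (ediam_ne_top_of_diam_ne_zero (by omega))).symm
    _ = 2 := by rw [hd]; rfl

def occupiedGraph (G : SimpleGraph V) (D : V → ℕ) : SimpleGraph V where
  Adj u v := G.Adj u v ∧ D u ≠ 0 ∧ D v ≠ 0
  symm := ⟨fun _ _ h => ⟨h.1.symm, h.2.2, h.2.1⟩⟩
  loopless := ⟨fun _ h => G.irrefl h.1⟩

@[simp]
lemma occupiedGraph_adj :
    (G.occupiedGraph D).Adj u v ↔ G.Adj u v ∧ D u ≠ 0 ∧ D v ≠ 0 :=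
  .rfl

lemma occupiedGraph_le : G.occupiedGraph D ≤ G := fun _ _ h => h.1

lemma ne_zero_of_reachable_occupiedGraph (h : (G.occupiedGraph D).Reachable x y)
    (hx : D x ≠ 0) : D y ≠ 0 := by
  rcases eq_or_ne y x with rfl | hyx
  · exact hx
  obtain ⟨p⟩ := h.symm
  obtain ⟨_, hadj, -, -⟩ := p.exists_eq_cons_of_ne hyx
  exact (occupiedGraph_adj.mp hadj).2.1

lemma exists_walk_of_reachable_occupiedGraph [DecidableEq V]
    (h : (G.occupiedGraph D).Reachable x y) :
    ∃ p : G.Walk x y, ∀ v ∈ p.support, (G.occupiedGraph D).Reachable x v := by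
  obtain ⟨p⟩ := h
  refine ⟨p.mapLe occupiedGraph_le, fun v hv => ⟨p.takeUntil v ?_⟩⟩
  rwa [Walk.support_mapLe_eq_support] at hv

lemma eq_on_reachable_of_eq_off {E E' : V → ℕ}
    (hoff : ∀ t, ¬ (G.occupiedGraph D).Reachable u t → t ≠ w → E' t = E t)
    (hw : D w = 0) (huv : ¬ (G.occupiedGraph D).Reachable u v) (hv : D v ≠ 0) :
    ∀ t, (G.occupiedGraph D).Reachable v t → E' t = E t := fun t hvt =>
  hoff t (fun hut => huv (hut.trans hvt.symm))
    fun htw => ne_zero_of_reachable_occupiedGraph hvt hv (htw ▸ hw)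

end SimpleGraph

section Pebbling

variable {V : Type*} [DecidableEq V] {G : SimpleGraph V} {D D₁ : V → ℕ} {r u v w x y z : V}

def pebMove (D : V → ℕ) (u v : V) : V → ℕ :=
  Function.update (Function.update D u (D u - 2)) v (D v + 1)

@[simp]
lemma pebMove_apply_right (D : V → ℕ) (u v : V) : pebMove D u v v = D v + 1 := by
  simp [pebMove]

@[simp]
lemma pebMove_apply_left (D : V → ℕ) (h : u ≠ v) : pebMove D u v u = D u - 2 := by
  simp [pebMove, h]

lemma pebMove_apply_of_ne (D : V → ℕ) (hu : w ≠ u) (hv : w ≠ v) :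
    pebMove D u v w = D w := by
  simp [pebMove, hu, hv]

lemma pebStep_pebMove (h : G.Adj u v) (hu : 2 ≤ D u) : PebStep G D (pebMove D u v) :=
  ⟨u, v, h, hu, rfl⟩

lemma pebSolvable_of_ne_zero (h : D r ≠ 0) : PebSolvable G D r :=
  ⟨D, .refl, Nat.one_le_iff_ne_zero.mpr h⟩

lemma PebSolvable.of_reflTransGen {D' : V → ℕ} (h : ReflTransGen (PebStep G) D D')
    (h' : PebSolvable G D' r) : PebSolvable G D r :=
  let ⟨D'', h₁, h₂⟩ := h'
  ⟨D'', h.trans h₁, h₂⟩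

lemma PebSolvable.of_pebStep {D' : V → ℕ} (h : PebStep G D D') (h' : PebSolvable G D' r) :
    PebSolvable G D r :=
  .of_reflTransGen (.single h) h'

lemma pebSolvable_of_adj (hwr : G.Adj w r) (hw : 2 ≤ D w) : PebSolvable G D r :=
  .of_pebStep (pebStep_pebMove hwr hw) (pebSolvable_of_ne_zero (by simp))

lemma pebSolvable_of_adj_adj (huw : G.Adj u w) (hwr : G.Adj w r) (hu : 4 ≤ D u) :
    PebSolvable G D r := by
  refine .of_pebStep (pebStep_pebMove huw (by omega))
    (.of_pebStep (pebStep_pebMove huw ?_) (pebSolvable_of_adj hwr (by simp)))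
  rw [pebMove_apply_left _ huw.ne]
  omega

lemma pebSolvable_of_common_neighbor (huv : u ≠ v) (hu : 2 ≤ D u) (hv : 2 ≤ D v)
    (huw : G.Adj u w) (hvw : G.Adj v w) (hwr : G.Adj w r) : PebSolvable G D r := by
  refine .of_pebStep (pebStep_pebMove huw hu)
    (.of_pebStep (pebStep_pebMove hvw ?_) (pebSolvable_of_adj hwr (by simp)))
  rwa [pebMove_apply_of_ne _ huv.symm hvw.ne]

lemma pebSolvable_of_edist_le_two (h : G.edist u r ≤ 2) (hu : 4 ≤ D u) : PebSolvable G D r := by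
  rcases eq_or_adj_or_exists_adj_adj_of_edist_le_two h with rfl | hur | ⟨w, huw, hwr⟩
  · exact pebSolvable_of_ne_zero (by omega)
  · exact pebSolvable_of_adj hur (by omega)
  · exact pebSolvable_of_adj_adj huw hwr hu

/-- Each interior vertex of the path receives a pebble and, then holding two, passes one on. -/
lemma exists_deliver_of_isPath {a b : V} {p : G.Walk a b} (hp : p.IsPath) (hab : a ≠ b)
    (ha : 2 ≤ D a) (hint : ∀ v ∈ p.support, v ≠ a → v ≠ b → D v ≠ 0) :
    ∃ D', ReflTransGen (PebStep G) D D' ∧ D' b = D b + 1 ∧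
      ∀ v ∉ p.support, D' v = D v := by
  induction p generalizing D with
  | nil => exact absurd rfl hab
  | @cons a z b haz q ih =>
    rw [Walk.cons_isPath_iff] at hp
    have hstep := pebStep_pebMove haz ha
    have hframe : ∀ v ∉ (q.cons haz).support, pebMove D a z v = D v := fun v hv => by
      simp only [Walk.support_cons, List.mem_cons, not_or] at hv
      exact pebMove_apply_of_ne _ hv.1 fun h => hv.2 (h ▸ q.start_mem_support)
    by_cases hzb : z = b
    · subst hzb
      exact ⟨_, .single hstep, by simp, hframe⟩
    have hz : 2 ≤ pebMove D a z z := by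
      have := hint z (by simp) haz.ne.symm hzb
      simp only [pebMove_apply_right]
      omega
    obtain ⟨D', hD', hb, hoff⟩ := ih hp.1 hzb hz fun v hv hvz hvb => by
      have hva : v ≠ a := fun h => hp.2 (h ▸ hv)
      rw [pebMove_apply_of_ne _ hva hvz]
      exact hint v (by simp [hv]) hva hvb
    refine ⟨D', (ReflTransGen.single hstep).trans hD', ?_, fun v hv => ?_⟩
    · rw [hb, pebMove_apply_of_ne _ hab.symm (Ne.symm hzb)]
    · rw [hoff v fun h => hv (by simp [h]), hframe v hv]

lemma exists_deliver_of_walk {a b : V} (p : G.Walk a b) (hab : a ≠ b) (ha : 2 ≤ D a)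
    (hint : ∀ v ∈ p.support, v ≠ a → v ≠ b → D v ≠ 0) :
    ∃ D', ReflTransGen (PebStep G) D D' ∧ D' b = D b + 1 ∧
      ∀ v ∉ p.support, D' v = D v := by
  have hsub := p.support_toPath_subset_support
  obtain ⟨D', h, hb, hoff⟩ :=
    exists_deliver_of_isPath p.toPath.2 hab ha fun v hv => hint v (hsub hv)
  exact ⟨D', h, hb, fun v hv => hoff v fun h => hv (hsub h)⟩

lemma exists_deliver_within (hxy : (G.occupiedGraph D).Reachable x y) (hne : x ≠ y)
    (hx : 2 ≤ D x) (hD₁ : ∀ v, (G.occupiedGraph D).Reachable x v → D₁ v = D v) :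
    ∃ D', ReflTransGen (PebStep G) D₁ D' ∧ D' y = D₁ y + 1 ∧
      ∀ v, ¬ (G.occupiedGraph D).Reachable x v → D' v = D₁ v := by
  obtain ⟨p, hp⟩ := exists_walk_of_reachable_occupiedGraph hxy
  obtain ⟨D', h, hy, hoff⟩ := exists_deliver_of_walk p hne (hD₁ x .rfl ▸ hx)
    fun v hv _ _ => hD₁ v (hp v hv) ▸ ne_zero_of_reachable_occupiedGraph (hp v hv) (by omega)
  exact ⟨D', h, hy, fun v hv => hoff v fun h => hv (hp v h)⟩

lemma exists_deliver_out (hxy : (G.occupiedGraph D).Reachable x y) (hyz : G.Adj y z) (hxz : x ≠ z)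
    (hx : 2 ≤ D x) (hD₁ : ∀ v, (G.occupiedGraph D).Reachable x v → D₁ v = D v) :
    ∃ D', ReflTransGen (PebStep G) D₁ D' ∧ D' z = D₁ z + 1 ∧
      ∀ v, ¬ (G.occupiedGraph D).Reachable x v → v ≠ z → D' v = D₁ v := by
  obtain ⟨p, hp⟩ := exists_walk_of_reachable_occupiedGraph hxy
  have hsupp : ∀ v ∈ (p.concat hyz).support, v = z ∨ (G.occupiedGraph D).Reachable x v := by
    simp only [Walk.support_concat, List.mem_append, List.mem_singleton]
    exact fun v hv => hv.elim (fun h => .inr (hp v h)) .inl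
  obtain ⟨D', h, hz, hoff⟩ := exists_deliver_of_walk (p.concat hyz) hxz (hD₁ x .rfl ▸ hx)
    fun v hv _ hvz => by
      have hxv := (hsupp v hv).resolve_left hvz
      exact hD₁ v hxv ▸ ne_zero_of_reachable_occupiedGraph hxv (by omega)
  exact ⟨D', h, hz, fun v hv hvz => hoff v fun h => ((hsupp v h).elim hvz hv)⟩

lemma exists_deliver_in (hyx : (G.occupiedGraph D).Reachable y x) (hxz : G.Adj x z)
    (hzy : z ≠ y) (hy : D y ≠ 0) (hz : 2 ≤ D₁ z)
    (hD₁ : ∀ v, (G.occupiedGraph D).Reachable y v → D₁ v = D v) :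
    ∃ D', ReflTransGen (PebStep G) D₁ D' ∧ D' y = D₁ y + 1 ∧
      ∀ v, ¬ (G.occupiedGraph D).Reachable y v → v ≠ z → D' v = D₁ v := by
  obtain ⟨p, hp⟩ := exists_walk_of_reachable_occupiedGraph hyx
  have hsupp : ∀ v ∈ (p.concat hxz).reverse.support,
      v = z ∨ (G.occupiedGraph D).Reachable y v := by
    simp only [Walk.support_reverse, List.mem_reverse, Walk.support_concat,
      List.mem_append, List.mem_singleton]
    exact fun v hv => hv.elim (fun h => .inr (hp v h)) .inl
  obtain ⟨D', h, hy', hoff⟩ := exists_deliver_of_walk (p.concat hxz).reverse hzy hz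
    fun v hv hvz _ => by
      have hyv := (hsupp v hv).resolve_left hvz
      exact hD₁ v hyv ▸ ne_zero_of_reachable_occupiedGraph hyv hy
  exact ⟨D', h, hy', fun v hv hvz => hoff v fun h => ((hsupp v h).elim hvz hv)⟩

lemma pebSolvable_of_reachable_adj (hx : 2 ≤ D x) (hxy : (G.occupiedGraph D).Reachable x y)
    (hyr : G.Adj y r) : PebSolvable G D r := by
  rcases eq_or_ne x r with rfl | hxr
  · exact pebSolvable_of_ne_zero (by omega)
  obtain ⟨D', h, hr, -⟩ := exists_deliver_out hxy hyr hxr hx fun _ _ => rfl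
  exact .of_reflTransGen h (pebSolvable_of_ne_zero (by omega))

lemma pebSolvable_of_reachable_three (hur : G.edist u r ≤ 2) (hu : 3 ≤ D u) (hv : 2 ≤ D v)
    (hvu : v ≠ u) (hreach : (G.occupiedGraph D).Reachable v u) : PebSolvable G D r := by
  obtain ⟨D', h, hu', -⟩ := exists_deliver_within hreach hvu hv fun _ _ => rfl
  exact .of_reflTransGen h (pebSolvable_of_edist_le_two hur (by omega))

section Unsolvable

variable (hr : ∀ u, G.edist u r ≤ 2) (huns : ¬ PebSolvable G D r)
include hr huns

lemma le_three_of_not_pebSolvable (u : V) : D u ≤ 3 := by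
  by_contra! h
  exact huns (pebSolvable_of_edist_le_two (hr u) h)

lemma exists_zero_common_neighbor (hu : 2 ≤ D u) :
    ∃ c, G.Adj u c ∧ G.Adj c r ∧ D c = 0 := by
  rcases eq_or_adj_or_exists_adj_adj_of_edist_le_two (hr u) with rfl | hur | ⟨c, huc, hcr⟩
  · exact absurd (pebSolvable_of_ne_zero (by omega)) huns
  · exact absurd (pebSolvable_of_adj hur hu) huns
  · refine ⟨c, huc, hcr, by_contra fun hc => huns ?_⟩
    exact pebSolvable_of_reachable_adj hu (Adj.reachable ⟨huc, by omega, hc⟩) hcr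

lemma not_reachable_of_three (huv : u ≠ v) (hu : 2 ≤ D u) (hv : 3 ≤ D v) :
    ¬ (G.occupiedGraph D).Reachable u v := fun h =>
  huns (pebSolvable_of_reachable_three (hr v) hv hu huv h)

end Unsolvable

variable [Fintype V]

open Classical in
noncomputable def zeroBoundary (G : SimpleGraph V) (D : V → ℕ) (u : V) : Finset V :=
  {d | D d = 0 ∧ ∃ x, (G.occupiedGraph D).Reachable u x ∧ G.Adj x d}

lemma mem_zeroBoundary : w ∈ zeroBoundary G D u ↔
    D w = 0 ∧ ∃ x, (G.occupiedGraph D).Reachable u x ∧ G.Adj x w := by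
  simp [zeroBoundary]

lemma pebSolvable_of_mem_two_zeroBoundary (hu : 2 ≤ D u) (hv : 2 ≤ D v)
    (huv : ¬ (G.occupiedGraph D).Reachable u v) (hwu : w ∈ zeroBoundary G D u)
    (hwv : w ∈ zeroBoundary G D v) (hwr : G.Adj w r) : PebSolvable G D r := by
  obtain ⟨hw, x, hux, hxw⟩ := mem_zeroBoundary.mp hwu
  obtain ⟨-, y, hvy, hyw⟩ := mem_zeroBoundary.mp hwv
  obtain ⟨D₁, h₁, hw₁, hoff₁⟩ :=
    exists_deliver_out hux hxw (by rintro rfl; omega) hu fun _ _ => rfl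
  obtain ⟨D₂, h₂, hw₂, -⟩ := exists_deliver_out hvy hyw (by rintro rfl; omega) hv
    (eq_on_reachable_of_eq_off hoff₁ hw huv (by omega))
  exact .of_reflTransGen (h₁.trans h₂) (pebSolvable_of_adj hwr (by omega))

/-- The components of `v` and `w` put two pebbles on `z`, which sends one into the component of
`u`, where it reaches `u`. -/
lemma pebSolvable_of_mem_three_zeroBoundary (hur : G.edist u r ≤ 2) (hu : 3 ≤ D u)
    (hv : 2 ≤ D v) (hw : 2 ≤ D w) (huv : ¬ (G.occupiedGraph D).Reachable u v)
    (huw : ¬ (G.occupiedGraph D).Reachable u w) (hvw : ¬ (G.occupiedGraph D).Reachable v w)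
    (hzu : z ∈ zeroBoundary G D u) (hzv : z ∈ zeroBoundary G D v)
    (hzw : z ∈ zeroBoundary G D w) :
    PebSolvable G D r := by
  obtain ⟨hz, x, hux, hxz⟩ := mem_zeroBoundary.mp hzu
  obtain ⟨-, y, hvy, hyz⟩ := mem_zeroBoundary.mp hzv
  obtain ⟨-, t, hwt, htz⟩ := mem_zeroBoundary.mp hzw
  obtain ⟨D₁, h₁, hz₁, hoff₁⟩ :=
    exists_deliver_out hvy hyz (by rintro rfl; omega) hv fun _ _ => rfl
  obtain ⟨D₂, h₂, hz₂, hoff₂⟩ := exists_deliver_out hwt htz (by rintro rfl; omega) hw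
    (eq_on_reachable_of_eq_off hoff₁ hz hvw (by omega))
  have hD₂ : ∀ t, (G.occupiedGraph D).Reachable u t → D₂ t = D t := fun t hut =>
    (eq_on_reachable_of_eq_off hoff₂ hz (fun h => huw h.symm) (by omega) t hut).trans
      (eq_on_reachable_of_eq_off hoff₁ hz (fun h => huv h.symm) (by omega) t hut)
  obtain ⟨D₃, h₃, hu₃, -⟩ :=
    exists_deliver_in hux hxz (by rintro rfl; omega) (by omega) (by omega) hD₂
  exact .of_reflTransGen (h₁.trans (h₂.trans h₃))
    (pebSolvable_of_edist_le_two hur (by rw [hu₃, hD₂ u .rfl]; omega))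

lemma three_le_card_zeroBoundary
    (h3conn : ∀ s : Finset V, #s ≤ 2 → (G.induce {v : V | v ∉ s}).Connected)
    (hu : D u ≠ 0) (hr : D r = 0) (hrB : r ∉ zeroBoundary G D u) :
    3 ≤ #(zeroBoundary G D u) := by
  by_contra! hB
  have huB : u ∉ zeroBoundary G D u := fun h => hu (mem_zeroBoundary.mp h).1
  obtain ⟨p⟩ := (h3conn _ (by omega)).preconnected ⟨u, huB⟩ ⟨r, hrB⟩
  obtain ⟨d, -, hd₁, hd₂⟩ :=
    p.exists_boundary_dart {a | (G.occupiedGraph D).Reachable u a} .rfl fun hur =>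
      ne_zero_of_reachable_occupiedGraph hur hu hr
  have hadj : G.Adj d.fst d.snd := d.adj
  by_cases hd : D d.snd = 0
  · exact d.snd.2 (mem_zeroBoundary.mpr ⟨hd, d.fst, hd₁, hadj⟩)
  · exact hd₂ (hd₁.trans (Adj.reachable
      ⟨hadj, ne_zero_of_reachable_occupiedGraph hd₁ hu, hd⟩))

section Unsolvable

open Classical

variable (hr : ∀ u, G.edist u r ≤ 2) (huns : ¬ PebSolvable G D r)
include huns

lemma root_notMem_zeroBoundary (hu : 2 ≤ D u) : r ∉ zeroBoundary G D u := fun h =>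
  let ⟨_, _, hux, hxr⟩ := mem_zeroBoundary.mp h
  huns (pebSolvable_of_reachable_adj hu hux hxr)

lemma two_le_card_zeroBoundary_filter_not_adj
    (h3conn : ∀ s : Finset V, #s ≤ 2 → (G.induce {v : V | v ∉ s}).Connected)
    (hu : 2 ≤ D u) (hN : #{d ∈ zeroBoundary G D u | G.Adj d r} ≤ 1) :
    2 ≤ #{d ∈ zeroBoundary G D u | ¬ G.Adj d r} := by
  have hr0 : D r = 0 := not_not.mp fun h => huns (pebSolvable_of_ne_zero h)
  have hB := three_le_card_zeroBoundary h3conn (by omega) hr0 (root_notMem_zeroBoundary huns hu)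
  rw [← card_filter_add_card_filter_not (G.Adj · r)] at hB
  omega

include hr

lemma disjoint_zeroBoundary_filter_adj (huv : u ≠ v) (hu : 2 ≤ D u) (hv : D v = 3) :
    Disjoint {d ∈ zeroBoundary G D u | G.Adj d r} {d ∈ zeroBoundary G D v | G.Adj d r} := by
  refine Finset.disjoint_left.mpr fun w hwu hwv => huns ?_
  rw [mem_filter] at hwu hwv
  exact pebSolvable_of_mem_two_zeroBoundary hu (by omega)
    (not_reachable_of_three hr huns huv hu (by omega)) hwu.1 hwv.1 hwu.2

lemma card_add_card_le_card_zero_adj :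
    #{u | 2 ≤ D u} + #{u | D u = 3 ∧ 2 ≤ #{d ∈ zeroBoundary G D u | G.Adj d r}} ≤
      #{d | D d = 0 ∧ G.Adj d r} := by
  set N : V → Finset V := fun u => {d ∈ zeroBoundary G D u | G.Adj d r}
  choose! c hc using fun u (hu : 2 ≤ D u) => exists_zero_common_neighbor hr huns hu
  have hcN : ∀ u, 2 ≤ D u → c u ∈ N u := fun u hu => by
    obtain ⟨huc, hcr, hc0⟩ := hc u hu
    exact mem_filter.mpr ⟨mem_zeroBoundary.mpr ⟨hc0, u, .rfl, huc⟩, hcr⟩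
  choose! c' hc' using fun u (hu : 2 ≤ #(N u)) => exists_mem_ne hu (c u)
  have hc_inj : Set.InjOn c {u | 2 ≤ D u} := fun u hu v hv huv => by
    by_contra hne
    exact huns (pebSolvable_of_common_neighbor hne hu hv (hc u hu).1 (huv ▸ (hc v hv).1)
      (hc u hu).2.1)
  have hc'_inj : Set.InjOn c' {u | D u = 3 ∧ 2 ≤ #(N u)} := fun u hu v hv huv => by
    by_contra hne
    have : 2 ≤ D u := by have := hu.1; omega
    exact Finset.disjoint_left.mp (disjoint_zeroBoundary_filter_adj hr huns hne this hv.1)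
      (hc' u hu.2).1 (huv ▸ (hc' v hv.2).1)
  have hdisj : Disjoint (image c {u | 2 ≤ D u}) (image c' {u | D u = 3 ∧ 2 ≤ #(N u)}) := by
    simp only [Finset.disjoint_left, mem_image, mem_filter, mem_univ, true_and]
    rintro _ ⟨u, hu, rfl⟩ ⟨v, hv, huv⟩
    obtain rfl | hne := eq_or_ne v u
    · exact (hc' v hv.2).2 huv
    · exact Finset.disjoint_left.mp (disjoint_zeroBoundary_filter_adj hr huns hne.symm hu hv.1)
        (hcN u hu) (huv ▸ (hc' v hv.2).1)
  rw [← card_image_of_injOn (s := {u | 2 ≤ D u}) (by simpa using hc_inj),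
    ← card_image_of_injOn (s := {u | D u = 3 ∧ 2 ≤ #(N u)}) (by simpa using hc'_inj),
    ← card_union_of_disjoint hdisj]
  refine card_le_card (union_subset ?_ ?_) <;>
    simp only [subset_iff, mem_image, mem_filter, mem_univ, true_and] <;> rintro _ ⟨u, hu, rfl⟩
  · exact ⟨(hc u hu).2.2, (hc u hu).2.1⟩
  · obtain ⟨hB, hadj⟩ := mem_filter.mp (hc' u hu.2).1
    exact ⟨(mem_zeroBoundary.mp hB).1, hadj⟩

lemma card_lt_card_zero_not_adj
    (h3conn : ∀ s : Finset V, #s ≤ 2 → (G.induce {v : V | v ∉ s}).Connected) :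
    #{u | D u = 3 ∧ ¬ 2 ≤ #{d ∈ zeroBoundary G D u | G.Adj d r}} <
      #{d | D d = 0 ∧ ¬ G.Adj d r} := by
  set S : Finset V := {u | D u = 3 ∧ ¬ 2 ≤ #{d ∈ zeroBoundary G D u | G.Adj d r}}
  set F : Finset V := {d | D d = 0 ∧ ¬ G.Adj d r}
  have hr0 : D r = 0 := not_not.mp fun h => huns (pebSolvable_of_ne_zero h)
  have hrF : r ∈ F := by simp [F, hr0]
  have hS : ∀ u ∈ S,
      2 ≤ #((F.erase r).bipartiteAbove (fun u d => d ∈ zeroBoundary G D u) u) := by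
    intro u hu
    obtain ⟨hu3, hN⟩ := (mem_filter.mp hu).2
    have hrB := root_notMem_zeroBoundary huns (u := u) (by omega)
    have h2 := two_le_card_zeroBoundary_filter_not_adj huns h3conn (u := u) (by omega) (by omega)
    refine h2.trans (card_le_card fun d hd => ?_)
    obtain ⟨hdB, hdr⟩ := mem_filter.mp hd
    refine mem_filter.mpr ⟨mem_erase.mpr ⟨fun h => hrB (h ▸ hdB), ?_⟩, hdB⟩
    simpa [F, hdr] using (mem_zeroBoundary.mp hdB).1
  have hsep : ∀ u ∈ S, ∀ v ∈ S, u ≠ v → ¬ (G.occupiedGraph D).Reachable u v := by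
    intro u hu v hv huv
    have := (mem_filter.mp hu).2.1
    have := (mem_filter.mp hv).2.1
    exact not_reachable_of_three hr huns huv (by omega) (by omega)
  have hF : ∀ d ∈ F.erase r,
      #(S.bipartiteBelow (fun u d => d ∈ zeroBoundary G D u) d) ≤ 2 := by
    intro d _
    by_contra! h
    obtain ⟨u, hu, v, hv, w, hw, huv, huw, hvw⟩ := two_lt_card.mp h
    simp only [bipartiteBelow, mem_filter] at hu hv hw
    have := (mem_filter.mp hu.1).2.1
    have := (mem_filter.mp hv.1).2.1
    have := (mem_filter.mp hw.1).2.1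
    exact huns (pebSolvable_of_mem_three_zeroBoundary (hr u) (by omega) (by omega) (by omega)
      (hsep u hu.1 v hv.1 huv) (hsep u hu.1 w hw.1 huw) (hsep v hv.1 w hw.1 hvw) hu.2 hv.2 hw.2)
  have hcount := card_mul_le_card_mul _ hS hF
  have := card_erase_of_mem hrF
  have := card_pos.mpr ⟨r, hrF⟩
  omega

end Unsolvable

lemma pebSolvable_of_sum_eq_card
    (h3conn : ∀ s : Finset V, #s ≤ 2 → (G.induce {v : V | v ∉ s}).Connected)
    (hr : ∀ u, G.edist u r ≤ 2) (hsum : ∑ v, D v = Fintype.card V) : PebSolvable G D r := by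
  classical
  by_contra huns
  have hzero := card_eq_zero_eq_of_sum_eq_card hsum (le_three_of_not_pebSolvable hr huns)
  have hnear := card_add_card_le_card_zero_adj hr huns
  have hfar := card_lt_card_zero_not_adj hr huns h3conn
  have h3 := card_filter_add_card_filter_not (s := {u | D u = 3})
    fun u => 2 ≤ #{d ∈ zeroBoundary G D u | G.Adj d r}
  have h0 := card_filter_add_card_filter_not (s := {d | D d = 0}) (G.Adj · r)
  simp only [filter_filter] at h3 h0
  omega

lemma card_le_of_forall_pebSolvable {t : ℕ}
    (h : ∀ D : V → ℕ, ∀ r, ∑ v, D v = t → PebSolvable G D r) :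
    Fintype.card V ≤ t := by
  by_contra! ht
  obtain ⟨r⟩ : Nonempty V := Fintype.card_pos_iff.mp (by omega)
  obtain ⟨T, hT, hTt⟩ := exists_subset_card_eq (s := univ.erase r) (n := t)
    (by rw [card_erase_of_mem (mem_univ r), card_univ]; omega)
  obtain ⟨D', hD', hr⟩ := h (fun v => if v ∈ T then 1 else 0) r (by simp [hTt])
  rcases hD'.cases_head with rfl | ⟨_, ⟨u, -, -, hu, -⟩, -⟩
  · have hrT : r ∈ T := by
      by_contra h
      simp [h] at hr
    exact (mem_erase.mp (hT hrT)).1 rfl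
  · dsimp only at hu
    split_ifs at hu <;> omega

lemma pebblingNumber_eq_card
    (h : ∀ D : V → ℕ, ∀ r, ∑ v, D v = Fintype.card V → PebSolvable G D r) :
    pebblingNumber V G = Fintype.card V :=
  le_antisymm (Nat.sInf_le h) (le_csInf ⟨_, h⟩ fun _ ht => card_le_of_forall_pebSolvable ht)

end Pebbling

theorem three_connected_diameter_two_class0_general {V : Type*} [Fintype V] [DecidableEq V]
    (G : SimpleGraph V)
    (h3conn : ∀ s : Finset V, s.card ≤ 2 → (G.induce {v : V | v ∉ s}).Connected)
    (hd : G.diam = 2) :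
    pebblingNumber V G = Fintype.card V :=
  pebblingNumber_eq_card fun _ r hsum =>
    pebSolvable_of_sum_eq_card h3conn (fun u => edist_le_two_of_diam_eq_two hd u r) hsum

theorem three_connected_diameter_two_class0 {V : Type*} [Fintype V] [DecidableEq V]
    (G : SimpleGraph V) (hG : G.Connected) (hcard : 3 < Fintype.card V)
    (h3conn : ∀ s : Finset V, s.card ≤ 2 → (G.induce {v : V | v ∉ s}).Connected)
    (hd : G.diam = 2) :
    pebblingNumber V G = Fintype.card V :=
  three_connected_diameter_two_class0_general G h3conn hd
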